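/- arXiv:1907.12884 — 11 statements merged into one kernel-verified Lean document; each statement's English description precedes it below -/
import Mathlib

section
/- For natural numbers k, the sum ∑_{j=0}^{k} (1/(j+1))·C(k,j)² equals (1/(k+1))·C(2k+1,k), where C(n,m) denotes the binomial coefficient. -/
/-! Absorbing the factor `1 / (j + 1)` turns `C(k, j)² / (j + 1)` into
`C(k + 1, j + 1) C(k, j) / (k + 1)`, and Vandermonde's identity sums `C(k + 1, j + 1) C(k, j)`
to `C(2k + 1, k + 1) = C(2k + 1, k)`. -/

open Finset

theorem Nat.sum_range_choose_add_one_mul_choose (m n : ℕ) :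
    ∑ j ∈ range (n + 1), m.choose (j + 1) * n.choose j = (m + n).choose (n + 1) := by
  rw [Nat.add_choose_eq, Finset.Nat.sum_antidiagonal_eq_sum_range_succ_mk, eq_comm,
    sum_range_succ']
  simp only [Nat.sub_zero, Nat.choose_succ_self, mul_zero, add_zero]
  refine sum_congr rfl fun j hj => ?_
  rw [Nat.add_sub_add_right, Nat.choose_symm (mem_range_succ_iff.mp hj)]

theorem Nat.cast_choose_div_add_one {K : Type*} [Field K] [CharZero K] (n k : ℕ) :
    (n.choose k : K) / (k + 1) = (n + 1).choose (k + 1) / (n + 1) := by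
  rw [div_eq_div_iff k.cast_add_one_ne_zero n.cast_add_one_ne_zero]
  rw [mul_comm]
  exact_mod_cast Nat.add_one_mul_choose_eq n k

theorem stmt_1 (k : ℕ) :
    ∑ j ∈ Finset.range (k + 1), (1 / (j + 1) : ℚ) * (k.choose j) ^ 2
      = (1 / (k + 1) : ℚ) * ((2 * k + 1).choose k) := by
  have hsummand (j : ℕ) : (1 / (j + 1) : ℚ) * (k.choose j) ^ 2
      = (1 / (k + 1) : ℚ) * ((k + 1).choose (j + 1) * k.choose j : ℕ) := by
    rw [Nat.cast_mul, ← mul_assoc, one_div_mul_eq_div, one_div_mul_eq_div,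
      ← Nat.cast_choose_div_add_one]
    ring
  rw [sum_congr rfl fun j _ => hsummand j, ← mul_sum, ← Nat.cast_sum,
    Nat.sum_range_choose_add_one_mul_choose, add_right_comm, ← two_mul, Nat.choose_symm_half]
end

section
/- For complex numbers a, b, c (with c not a nonpositive integer) and parameters t, θ such that all series converge absolutely: e^{tθ}·₂F₁(a,b;c;t) = ∑_{m=0}^{∞} ((tθ)^m/m!)·₃F₁(a,b,-m;c;-1/θ). In particular, for a = b = -k with k a natural number (so all inner series are finite sums), e^{tθ}·∑_{i=0}^{k} ((-k)_i)²/((c)_i·i!)·t^i = ∑_{m=0}^{∞} ((tθ)^m/m!)·∑_{i=0}^{m∧k} ((-k)_i)²·(-m)_i/((c)_i·i!)·(-1/θ)^i. -/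
/-!
Since `(-m)_i (-1/θ)^i = m! / ((m - i)! θ^i)` for `i ≤ m` (and `(-m)_i = 0` for `i > m`), the `m`-th
term of the right-hand side equals `∑_{i ≤ m} A_i t^i (tθ)^(m-i) / (m-i)!`, where `A_i` are the
coefficients of `₂F₁(-k,-k;c;t)`. This is the `m`-th term of the Cauchy product of the
polynomial `∑ A_i t^i` with the exponential series of `tθ`.
-/

open Finset

/-- The rising factorial (Pochhammer symbol) `(a)_n = a (a+1) ⋯ (a+n-1)` for a real `a`. -/
noncomputable def rf (a : ℝ) (n : ℕ) : ℝ := ∏ j ∈ Finset.range n, (a + j)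

open scoped Nat

theorem rf_succ (a : ℝ) (n : ℕ) : rf a (n + 1) = rf a n * (a + n) :=
  prod_range_succ _ _

theorem rf_neg_natCast (m i : ℕ) : rf (-(m : ℝ)) i = (-1) ^ i * m.descFactorial i := by
  induction i with
  | zero => simp [rf]
  | succ i ih =>
    rw [rf_succ, ih, Nat.descFactorial_succ]
    rcases le_or_gt i m with hle | hlt
    · push_cast [hle]
      ring
    · simp [Nat.descFactorial_eq_zero_iff_lt.mpr hlt]

theorem rf_neg_natCast_of_lt {m i : ℕ} (h : m < i) : rf (-(m : ℝ)) i = 0 := by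
  simp [rf_neg_natCast, Nat.descFactorial_eq_zero_iff_lt.mpr h]

theorem tsum_mul_exp_eq_tsum_sum_range (a : ℕ → ℝ) (ha : Summable fun i => ‖a i‖) (x : ℝ) :
    (∑' i, a i) * Real.exp x = ∑' m, ∑ i ∈ range (m + 1), a i * (x ^ (m - i) / (m - i)!) := by
  rw [Real.exp_eq_exp_ℝ, NormedSpace.exp_eq_tsum_div]
  exact tsum_mul_tsum_eq_tsum_sum_range_of_summable_norm ha
    (Real.summable_pow_div_factorial x).norm

theorem pow_div_factorial_mul_rf_neg_natCast {m i : ℕ} (h : i ≤ m) (t : ℝ) {θ : ℝ} (hθ : θ ≠ 0) :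
    (t * θ) ^ m / m ! * (rf (-(m : ℝ)) i * (-1 / θ) ^ i) =
      t ^ i * ((t * θ) ^ (m - i) / (m - i)!) := by
  have hfac : ((m - i)! : ℝ) * m.descFactorial i = m ! := by
    exact_mod_cast Nat.factorial_mul_descFactorial h
  have hpow : (t * θ) ^ m = t ^ i * (t * θ) ^ (m - i) * θ ^ i := by
    rw [← pow_sub_mul_pow _ h]; ring
  have hsign : (-1 : ℝ) ^ i * (-1 / θ) ^ i * θ ^ i = 1 := by
    rw [← mul_pow, ← mul_pow, neg_one_mul, neg_div, neg_neg, one_div_mul_cancel hθ, one_pow]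
  have hdesc : (m.descFactorial i : ℝ) ≠ 0 := by exact_mod_cast (Nat.descFactorial_pos.mpr h).ne'
  rw [rf_neg_natCast, hpow, ← hfac]
  field_simp
  linear_combination t ^ i * (t * θ) ^ (m - i) * hsign

theorem stmt_5_general (k : ℕ) (c t θ : ℝ) (hθ : θ ≠ 0) :
    Real.exp (t * θ) *
        ∑ i ∈ Finset.range (k + 1),
          (rf (-(k : ℝ)) i) ^ 2 / (rf c i * i.factorial) * t ^ i
      = ∑' m : ℕ, (t * θ) ^ m / m.factorial *
          ∑ i ∈ Finset.range (min m k + 1),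
            (rf (-(k : ℝ)) i) ^ 2 * rf (-(m : ℝ)) i / (rf c i * i.factorial)
              * (-1 / θ) ^ i := by
  set a : ℕ → ℝ := fun i => rf (-(k : ℝ)) i ^ 2 / (rf c i * i !) * t ^ i
  have ha : ∀ i ∉ range (k + 1), a i = 0 := fun i hi => by
    simp [a, rf_neg_natCast_of_lt (not_lt.mp (mem_range.not.mp hi))]
  rw [mul_comm, ← tsum_eq_sum (L := .unconditional ℕ) ha,
    tsum_mul_exp_eq_tsum_sum_range a
      (summable_of_ne_finset_zero (s := range (k + 1)) fun i hi => by simp [ha i hi])]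
  refine tsum_congr fun m => ?_
  have hsub : range (min m k + 1) ⊆ range (m + 1) := range_subset_range.mpr (by omega)
  rw [← sum_subset hsub fun i hm hi => by rw [ha i (by simp at hm hi ⊢; omega), zero_mul], mul_sum]
  refine sum_congr rfl fun i hi => ?_
  have him : i ≤ m := by simp at hi; omega
  rw [mul_assoc, ← pow_div_factorial_mul_rf_neg_natCast him t hθ]
  ring

/-- Exton's lemma in the terminating case `a = b = -k`:
`e^{tθ} ₂F₁(-k,-k;c;t) = ∑_m (tθ)^m/m! ₃F₁(-k,-k,-m;c;-1/θ)`. -/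
theorem stmt_5 (k : ℕ) (c t θ : ℝ) (hθ : θ ≠ 0) (hc : ∀ i : ℕ, rf c i ≠ 0) :
    Real.exp (t * θ) *
        ∑ i ∈ Finset.range (k + 1),
          (rf (-(k : ℝ)) i) ^ 2 / (rf c i * i.factorial) * t ^ i
      = ∑' m : ℕ, (t * θ) ^ m / m.factorial *
          ∑ i ∈ Finset.range (min m k + 1),
            (rf (-(k : ℝ)) i) ^ 2 * rf (-(m : ℝ)) i / (rf c i * i.factorial)
              * (-1 / θ) ^ i :=
  stmt_5_general k c t θ hθ
end

section
/- For real θ > 0, t > 0, and natural number k, the Poissonised Charlier factorial moment M^θ(k;t) := ∑_{m=0}^{∞} e^{-tθ}·(tθ)^m/m! · M^θ(k,m+1) equals θ^k·∑_{i=0}^{k} C(k,i)²·t^i/(i+1), i.e. θ^k·₂F₁(-k,-k;2;t). -/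
/-!
A Poisson variable `X` of rate `x` has factorial moments `E[X (X - 1) ⋯ (X - i + 1)] = x ^ i`,
since shifting the summation index by `i` turns the sum into the exponential series.
The `i`th term of `M^θ(k, m + 1)` contains the rising factorial `(m + 1 - i)_i`, which is the
falling factorial `m (m - 1) ⋯ (m - i + 1)`, so Poissonising term by term replaces it with
`(tθ) ^ i`, and `θ ^ (k - i) (tθ) ^ i = θ ^ k t ^ i`.
-/

open Finset

/-- The `k`th factorial moment of the Charlier ensemble with `N` particles and parameter `θ`. -/
noncomputable def charlierMoment (θ : ℝ) (k N : ℕ) : ℝ :=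
  ∑ i ∈ Finset.range (k + 1),
    θ ^ (k - i) * (k.choose i : ℝ) ^ 2 * ((N - i).ascFactorial i : ℝ) / (i + 1)

theorem Nat.ascFactorial_succ_sub_eq_descFactorial (m i : ℕ) :
    (m + 1 - i).ascFactorial i = m.descFactorial i := by
  rcases le_or_gt i (m + 1) with h | h
  · rw [← add_descFactorial_eq_ascFactorial', Nat.sub_add_cancel h, Nat.add_sub_cancel]
  · obtain ⟨j, rfl⟩ := Nat.exists_eq_add_of_lt h
    rw [Nat.sub_eq_zero_of_le (by omega), zero_ascFactorial, descFactorial_of_lt (by omega)]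

open Nat in
theorem hasSum_poisson_mul_descFactorial (x : ℝ) (i : ℕ) :
    HasSum (fun m : ℕ ↦ Real.exp (-x) * x ^ m / m ! * m.descFactorial i) (x ^ i) := by
  rw [← hasSum_nat_add_iff' i]
  have h_head : ∑ m ∈ range i, Real.exp (-x) * x ^ m / m ! * (m.descFactorial i : ℝ) = 0 :=
    sum_eq_zero fun m hm ↦ by rw [descFactorial_of_lt (mem_range.1 hm), cast_zero, mul_zero]
  have h_shift (n : ℕ) : Real.exp (-x) * x ^ (n + i) / (n + i)! * ((n + i).descFactorial i : ℝ)
      = Real.exp (-x) * x ^ i * (x ^ n / n !) := by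
    have h := factorial_mul_descFactorial (Nat.le_add_left i n)
    rw [Nat.add_sub_cancel] at h
    have h' : ((n + i)! : ℝ) = n ! * (n + i).descFactorial i := by exact_mod_cast h.symm
    rw [h', pow_add]
    have : ((n + i).descFactorial i : ℝ) ≠ 0 := by
      exact_mod_cast (descFactorial_pos.2 (Nat.le_add_left i n)).ne'
    field_simp
  simp only [h_head, sub_zero, h_shift]
  have h_exp : HasSum (fun n ↦ x ^ n / n !) (Real.exp x) := by
    simpa only [Real.exp_eq_exp_ℝ] using NormedSpace.expSeries_div_hasSum_exp x
  have h_val : Real.exp (-x) * x ^ i * Real.exp x = x ^ i := by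
    rw [mul_right_comm, ← Real.exp_add, neg_add_cancel, Real.exp_zero, one_mul]
  simpa only [h_val] using h_exp.mul_left (Real.exp (-x) * x ^ i)

theorem charlierMoment_succ (θ : ℝ) (k m : ℕ) :
    charlierMoment θ k (m + 1) =
      ∑ i ∈ range (k + 1),
        θ ^ (k - i) * (k.choose i : ℝ) ^ 2 * (m.descFactorial i : ℝ) / (i + 1) := by
  simp only [charlierMoment, Nat.ascFactorial_succ_sub_eq_descFactorial]

theorem stmt_6_general (θ t : ℝ) (k : ℕ) :
    ∑' m : ℕ, Real.exp (-(t * θ)) * (t * θ) ^ m / m.factorial * charlierMoment θ k (m + 1)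
      = θ ^ k * ∑ i ∈ Finset.range (k + 1), (k.choose i : ℝ) ^ 2 * t ^ i / (i + 1) := by
  have h_term (i : ℕ) (hi : i ∈ range (k + 1)) :
      HasSum (fun m : ℕ ↦ Real.exp (-(t * θ)) * (t * θ) ^ m / m.factorial *
        (θ ^ (k - i) * (k.choose i : ℝ) ^ 2 * (m.descFactorial i : ℝ) / (i + 1)))
        (θ ^ k * ((k.choose i : ℝ) ^ 2 * t ^ i / (i + 1))) := by
    have h_pow : θ ^ k = θ ^ (k - i) * θ ^ i := by
      rw [← pow_add, Nat.sub_add_cancel (Nat.lt_succ_iff.1 (mem_range.1 hi))]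
    have h := (hasSum_poisson_mul_descFactorial (t * θ) i).mul_left
      (θ ^ (k - i) * (k.choose i : ℝ) ^ 2 / (i + 1))
    rw [show θ ^ (k - i) * (k.choose i : ℝ) ^ 2 / (i + 1) * (t * θ) ^ i
        = θ ^ k * ((k.choose i : ℝ) ^ 2 * t ^ i / (i + 1)) by rw [h_pow]; ring] at h
    exact h.congr_fun fun m ↦ by ring
  simp only [charlierMoment_succ, mul_sum]
  exact (hasSum_sum h_term).tsum_eq

theorem stmt_6 (θ t : ℝ) (hθ : 0 < θ) (ht : 0 < t) (k : ℕ) :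
    ∑' m : ℕ, Real.exp (-(t * θ)) * (t * θ) ^ m / m.factorial * charlierMoment θ k (m + 1)
      = θ ^ k * ∑ i ∈ Finset.range (k + 1), (k.choose i : ℝ) ^ 2 * t ^ i / (i + 1) :=
  stmt_6_general θ t k
end

section
/- For 0 < q < 1, natural numbers k and N ≥ 1, the γ=1 Meixner factorial moment satisfies M¹_q(k,N) = (q/(1-q))^k · ∑_{i=0}^{k} q^{-i}·C(k,i)²·(N-i)_{k+1}/(N·(k+1)), where (a)_{k+1} is the rising factorial. -/
/-!
Writing `l = i + j`, the summand `l! / (l - i)! · (l + 1)_{k-i}` is the rising factorial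
`(j + 1)_k`, so the inner sum is `∑_{j < N - i} (j + 1)_k`. This telescopes, since
`(k + 1) · (j + 1)_k = (j + 1)_{k+1} - j_{k+1}`, to `(N - i)_{k+1} / (k + 1)`.
-/

open Finset

namespace Nat

theorem succ_mul_sum_range_ascFactorial (k : ℕ) :
    ∀ M : ℕ, (k + 1) * ∑ j ∈ range M, (j + 1).ascFactorial k = M.ascFactorial (k + 1)
  | 0 => by simp [zero_ascFactorial]
  | M + 1 => by
    rw [sum_range_succ, Nat.mul_add, succ_mul_sum_range_ascFactorial k M, ascFactorial_succ,
      ascFactorial_succ, ← succ_ascFactorial M k]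
    ring

theorem descFactorial_mul_succ_ascFactorial {i k l : ℕ} (hik : i ≤ k) (hil : i ≤ l) :
    l.descFactorial i * (l + 1).ascFactorial (k - i) = (l - i + 1).ascFactorial k := by
  obtain ⟨m, rfl⟩ := Nat.exists_eq_add_of_le' hil
  rw [add_descFactorial_eq_ascFactorial, Nat.add_sub_cancel, Nat.add_right_comm,
    ascFactorial_mul_ascFactorial, Nat.add_sub_cancel' hik]

end Nat

theorem factorial_div_factorial_sub_mul_ascFactorial {i k l : ℕ} (hik : i ≤ k) (hil : i ≤ l) :
    (l.factorial : ℝ) / (l - i).factorial * ((1 + l).ascFactorial (k - i) : ℝ)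
      = ((l - i + 1).ascFactorial k : ℝ) := by
  rw [← Nat.descFactorial_mul_succ_ascFactorial hik hil, ← Nat.factorial_mul_descFactorial hil,
    Nat.add_comm 1 l]
  push_cast
  field_simp

theorem sum_Ico_factorial_div_factorial_sub_mul_ascFactorial {i k : ℕ} (hik : i ≤ k) (N : ℕ) :
    ∑ l ∈ Ico i N, (l.factorial : ℝ) / (l - i).factorial * ((1 + l).ascFactorial (k - i) : ℝ)
      = ((N - i).ascFactorial (k + 1) : ℝ) / (k + 1) := by
  rw [sum_Ico_eq_sum_range]
  have hsum := congrArg (Nat.cast (R := ℝ)) (Nat.succ_mul_sum_range_ascFactorial k (N - i))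
  push_cast at hsum
  rw [← hsum, mul_div_cancel_left₀ _ (by positivity)]
  refine sum_congr rfl fun j _ => ?_
  rw [factorial_div_factorial_sub_mul_ascFactorial hik (Nat.le_add_right i j),
    Nat.add_sub_cancel_left]

theorem stmt_11_general (q : ℝ) (k N : ℕ) :
    ∑ i ∈ Finset.range (k + 1),
        (q / (1 - q)) ^ k * q ^ (-(i : ℤ)) * (k.choose i : ℝ) ^ 2 * (1 / N)
          * ∑ l ∈ Finset.Icc i (N - 1),
              ((l.factorial : ℝ) / (l - i).factorial) * ((1 + l).ascFactorial (k - i) : ℝ)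
      = (q / (1 - q)) ^ k * ∑ i ∈ Finset.range (k + 1),
          q ^ (-(i : ℤ)) * (k.choose i : ℝ) ^ 2
            * ((N - i).ascFactorial (k + 1) : ℝ) / (N * (k + 1)) := by
  rcases N.eq_zero_or_pos with rfl | hN
  · simp
  rw [mul_sum]
  refine sum_congr rfl fun i hi => ?_
  have hik : i ≤ k := Nat.lt_succ_iff.mp (mem_range.mp hi)
  rw [Icc_sub_one_right_eq_Ico_of_not_isMin (by simpa using hN.ne'),
    sum_Ico_factorial_div_factorial_sub_mul_ascFactorial hik, div_mul_eq_div_div]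
  ring

theorem stmt_11 (q : ℝ) (hq0 : 0 < q) (hq1 : q < 1) (k N : ℕ) (hN : 1 ≤ N) :
    ∑ i ∈ Finset.range (k + 1),
        (q / (1 - q)) ^ k * q ^ (-(i : ℤ)) * (k.choose i : ℝ) ^ 2 * (1 / N)
          * ∑ l ∈ Finset.Icc i (N - 1),
              ((l.factorial : ℝ) / (l - i).factorial) * ((1 + l).ascFactorial (k - i) : ℝ)
      = (q / (1 - q)) ^ k * ∑ i ∈ Finset.range (k + 1),
          q ^ (-(i : ℤ)) * (k.choose i : ℝ) ^ 2
            * ((N - i).ascFactorial (k + 1) : ℝ) / (N * (k + 1)) :=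
  stmt_11_general q k N
end

section
/- For 0 < q < 1, 0 < t < 1/q, and natural number k: ∑_{m=0}^{∞} (m+1)·(tq)^m·(1-tq)²·M¹_q(k,m+1) = k!·(q/((1-q)(1-tq)))^k·∑_{i=0}^{k} C(k,i)²·t^i, where M¹_q(k,N) = (q/(1-q))^k·∑_{i=0}^{k} q^{-i}·C(k,i)²·(N-i)_{k+1}/(N·(k+1)). -/
/-!
Multiplying `meixnerMoment q k (m + 1)` by `m + 1` clears its denominator, so each summand is a
finite combination of the series `∑ₘ xᵐ (m + 1 - i)_{k+1}` with `x = t q`. Up to the shift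
`m ↦ m + i` (the terms with `m < i` vanish) these are `(k + 1)! ∑ₘ C(m + k + 1, k + 1) xᵐ
= (k + 1)! / (1 - x)^{k+2}`, and the factor `q^{-i} xⁱ = tⁱ` produces the right-hand side.
-/

open Finset

/-- The `k`th factorial moment of the Meixner ensemble with `γ = 1`, parameter `q` and `N`
particles. -/
noncomputable def meixnerMoment (q : ℝ) (k N : ℕ) : ℝ :=
  (q / (1 - q)) ^ k * ∑ i ∈ Finset.range (k + 1),
    q ^ (-(i : ℤ)) * (k.choose i : ℝ) ^ 2 * ((N - i).ascFactorial (k + 1) : ℝ) / (N * (k + 1))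

section

variable {𝕜 : Type*} [NormedField 𝕜] {x : 𝕜}

lemma hasSum_pow_mul_ascFactorial (hx : ‖x‖ < 1) (k : ℕ) :
    HasSum (fun m : ℕ ↦ x ^ m * ((m + 1).ascFactorial (k + 1) : 𝕜))
      ((k + 1).factorial / (1 - x) ^ (k + 2)) := by
  rw [div_eq_mul_one_div]
  refine ((hasSum_choose_mul_geometric_of_norm_lt_one (k + 1) hx).mul_left
    ((k + 1).factorial : 𝕜)).congr_fun fun m ↦ ?_
  rw [Nat.ascFactorial_eq_factorial_mul_choose]
  push_cast
  ring

lemma hasSum_pow_mul_ascFactorial_sub (hx : ‖x‖ < 1) (k i : ℕ) :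
    HasSum (fun m : ℕ ↦ x ^ m * ((m + 1 - i).ascFactorial (k + 1) : 𝕜))
      (x ^ i * ((k + 1).factorial / (1 - x) ^ (k + 2))) := by
  have hshift := (hasSum_pow_mul_ascFactorial hx k).mul_left (x ^ i)
  rw [← (add_left_injective i).hasSum_iff]
  · refine hshift.congr_fun fun n ↦ ?_
    simp only [Function.comp_apply, pow_add, Nat.add_right_comm n i 1, Nat.add_sub_cancel]
    ring
  · intro m hm
    have : m + 1 - i = 0 := by
      by_contra h
      exact hm ⟨m - i, by dsimp only; omega⟩
    simp [this, Nat.zero_ascFactorial]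

end

lemma natCast_mul_meixnerMoment (q : ℝ) (k : ℕ) {N : ℕ} (hN : N ≠ 0) :
    N * meixnerMoment q k N = (q / (1 - q)) ^ k / (k + 1) * ∑ i ∈ range (k + 1),
      q ^ (-(i : ℤ)) * (k.choose i : ℝ) ^ 2 * ((N - i).ascFactorial (k + 1) : ℝ) := by
  rw [meixnerMoment, mul_sum, mul_sum, mul_sum]
  refine sum_congr rfl fun i _ ↦ ?_
  field_simp

theorem stmt_12 (q t : ℝ) (hq0 : 0 < q) (hq1 : q < 1) (ht0 : 0 < t) (ht1 : t < 1 / q)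
    (k : ℕ) :
    ∑' m : ℕ, ((m : ℝ) + 1) * (t * q) ^ m * (1 - t * q) ^ 2 * meixnerMoment q k (m + 1)
      = (k.factorial : ℝ) * (q / ((1 - q) * (1 - t * q))) ^ k
          * ∑ i ∈ Finset.range (k + 1), (k.choose i : ℝ) ^ 2 * t ^ i := by
  set x := t * q
  have hx0 : 0 < x := mul_pos ht0 hq0
  have hx1 : x < 1 := by rwa [lt_div_iff₀ hq0] at ht1
  have hx : ‖x‖ < 1 := by rwa [Real.norm_of_nonneg hx0.le]
  set c := (1 - x) ^ 2 * ((q / (1 - q)) ^ k / (k + 1))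
  have hsum := (hasSum_sum (s := range (k + 1)) fun i _ ↦
    (hasSum_pow_mul_ascFactorial_sub hx k i).mul_left (q ^ (-(i : ℤ)) * (k.choose i : ℝ) ^ 2)).mul_left c
  have hterm (m : ℕ) : ((m : ℝ) + 1) * x ^ m * (1 - x) ^ 2 * meixnerMoment q k (m + 1) =
      c * ∑ i ∈ range (k + 1), q ^ (-(i : ℤ)) * (k.choose i : ℝ) ^ 2 *
        (x ^ m * ((m + 1 - i).ascFactorial (k + 1) : ℝ)) := by
    have hM := natCast_mul_meixnerMoment q k m.succ_ne_zero
    push_cast at hM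
    rw [show ((m : ℝ) + 1) * x ^ m * (1 - x) ^ 2 * meixnerMoment q k (m + 1)
      = (1 - x) ^ 2 * x ^ m * ((m + 1) * meixnerMoment q k (m + 1)) by ring, hM]
    simp only [c, mul_sum]
    refine sum_congr rfl fun i _ ↦ ?_
    ring
  rw [tsum_congr hterm, hsum.tsum_eq, mul_sum, mul_sum]
  refine sum_congr rfl fun i _ ↦ ?_
  have hqi : q ^ (-(i : ℤ)) * x ^ i = t ^ i := by
    rw [zpow_neg, zpow_natCast, mul_pow]
    field_simp
  have h1q : 1 - q ≠ 0 := by linarith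
  have h1x : 1 - x ≠ 0 := by linarith
  simp only [c, Nat.factorial_succ]
  push_cast
  rw [← hqi, div_pow, div_pow, mul_pow (1 - q)]
  field_simp
  ring
end

section
/- For 0 < q < 1 and natural number k, the 2-negative-binomialised γ=1 Meixner factorial moment at t = 1 equals (q^k/(1-q)^{2k})·(k+1)!·C_k, where C_k is the kth Catalan number. -/
open Finset

/-!
Writing `(m + 1) · meixnerMoment q k (m + 1)` as a combination of the rising factorials
`(m + 1 - i)^{(k+1)}`, each of them is summed against `q^m` by the negative binomial series
`∑ₘ (m+1)^{(k+1)} q^m = (k+1)! / (1 - q)^{k+2}`, shifted by `i`. The resulting factor `q^i`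
cancels the weight `q^{-i}`, so only `∑ᵢ C(k,i)² = C(2k,k) = (k+1) C_k` remains.
-/

section NegativeBinomial

variable {𝕜 : Type*} [NormedField 𝕜] {r : 𝕜}

theorem hasSum_ascFactorial_mul_geometric (k : ℕ) (hr : ‖r‖ < 1) :
    HasSum (fun n : ℕ => ((n + 1).ascFactorial k : 𝕜) * r ^ n)
      (k.factorial / (1 - r) ^ (k + 1)) := by
  simpa [Nat.ascFactorial_eq_factorial_mul_choose, mul_assoc, div_eq_mul_inv] using
    (hasSum_choose_mul_geometric_of_norm_lt_one k hr).mul_left (k.factorial : 𝕜)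

theorem hasSum_ascFactorial_sub_mul_geometric (i k : ℕ) (hr : ‖r‖ < 1) :
    HasSum (fun n : ℕ => ((n + 1 - i).ascFactorial (k + 1) : 𝕜) * r ^ n)
      ((k + 1).factorial * r ^ i / (1 - r) ^ (k + 2)) := by
  have head_eq_zero :
      ∑ n ∈ range i, ((n + 1 - i).ascFactorial (k + 1) : 𝕜) * r ^ n = 0 := by
    refine sum_eq_zero fun n hn => ?_
    rw [Nat.sub_eq_zero_of_le (mem_range.mp hn), Nat.zero_ascFactorial]
    simp
  rw [← hasSum_nat_add_iff' i, head_eq_zero, sub_zero]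
  have shifted : (fun n : ℕ => ((n + i + 1 - i).ascFactorial (k + 1) : 𝕜) * r ^ (n + i))
      = fun n => ((n + 1).ascFactorial (k + 1) : 𝕜) * r ^ n * r ^ i := by
    funext n
    rw [show n + i + 1 - i = n + 1 by omega, pow_add, mul_assoc]
  rw [shifted, mul_div_right_comm]
  exact (hasSum_ascFactorial_mul_geometric (k + 1) hr).mul_right (r ^ i)

end NegativeBinomial

theorem succ_mul_meixnerMoment_succ (q : ℝ) (k N : ℕ) :
    ((N : ℝ) + 1) * meixnerMoment q k (N + 1) = (q / (1 - q)) ^ k / (k + 1) *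
      ∑ i ∈ range (k + 1),
        q ^ (-(i : ℤ)) * (k.choose i : ℝ) ^ 2 * (N + 1 - i).ascFactorial (k + 1) := by
  rw [meixnerMoment, mul_sum, mul_sum, mul_sum]
  refine sum_congr rfl fun i _ => ?_
  push_cast
  field_simp

theorem hasSum_mul_meixnerMoment {q : ℝ} (hq0 : q ≠ 0) (hq1 : |q| < 1) (k : ℕ) :
    HasSum (fun m : ℕ => ((m : ℝ) + 1) * q ^ m * meixnerMoment q k (m + 1))
      ((q / (1 - q)) ^ k / (k + 1) *
        ((k + 1).factorial * (2 * k).choose k / (1 - q) ^ (k + 2))) := by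
  have weighted_sum : ∑ i ∈ range (k + 1), q ^ (-(i : ℤ)) * (k.choose i : ℝ) ^ 2 *
      ((k + 1).factorial * q ^ i / (1 - q) ^ (k + 2))
        = (k + 1).factorial * (2 * k).choose k / (1 - q) ^ (k + 2) := by
    have hsq := congrArg (Nat.cast : ℕ → ℝ) (Nat.sum_range_choose_sq k)
    push_cast at hsq
    rw [← hsq, mul_sum, sum_div]
    refine sum_congr rfl fun i _ => ?_
    rw [zpow_neg, zpow_natCast]
    field_simp
  have hsum := (hasSum_sum (s := range (k + 1)) fun i _ =>
    (hasSum_ascFactorial_sub_mul_geometric i k hq1).mul_left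
      (q ^ (-(i : ℤ)) * (k.choose i : ℝ) ^ 2)).mul_left ((q / (1 - q)) ^ k / (k + 1))
  rw [weighted_sum] at hsum
  refine hsum.congr_fun fun m => ?_
  rw [mul_right_comm, succ_mul_meixnerMoment_succ, mul_assoc, sum_mul]
  simp only [mul_assoc]

theorem stmt_13 (q : ℝ) (hq0 : 0 < q) (hq1 : q < 1) (k : ℕ) :
    ∑' m : ℕ, ((m : ℝ) + 1) * q ^ m * (1 - q) ^ 2 * meixnerMoment q k (m + 1)
      = q ^ k / (1 - q) ^ (2 * k) * ((k + 1).factorial : ℝ) * (catalan k : ℝ) := by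
  have hsum := (hasSum_mul_meixnerMoment hq0.ne' (abs_lt.mpr ⟨by linarith, hq1⟩) k).mul_left
    ((1 - q) ^ 2)
  have hcat : ((2 * k).choose k : ℝ) = (k + 1) * catalan k := by
    rw [← Nat.centralBinom_eq_two_mul_choose, ← succ_mul_catalan_eq_centralBinom]
    push_cast
    ring
  have h1q : 1 - q ≠ 0 := by linarith
  rw [(hsum.congr_fun fun m => by ring).tsum_eq, hcat, div_pow]
  field_simp
  ring
end

section
/- For real h > 0 and natural number k: ∫_0^1 ∫_{-1}^1 (u + 2√(uh)·s + h)^k · (1/(π√(1-s²))) ds du = h^k · ∑_{m=0}^{k} C(k,m)²·h^{-m}/(m+1). -/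
/-!
Substituting `s = cos θ` turns the arcsine average into `(1 / 2π) ∫₀^{2π} F(cos θ) dθ`, and for
`u ≥ 0` the integrand becomes `|√u e^{iθ} + √h|^{2k} = (√u e^{iθ} + √h)^k (√u e^{-iθ} + √h)^k`.
Expanding both factors binomially, orthogonality of `e^{imθ}` leaves only the diagonal terms
`C(k,m)² u^m h^{k-m}`; integrating `u^m` over `[0, 1]` gives the factor `1 / (m + 1)`.
-/

open Real Finset MeasureTheory

lemma integral_div_sqrt_one_sub_sq_eq_integral_comp_cos (F : ℝ → ℝ) :
    ∫ s in (-1:ℝ)..1, F s / √(1 - s ^ 2) = ∫ θ in (0:ℝ)..π, F (cos θ) := by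
  have himage : cos '' Set.Ioo 0 π = Set.Ioo (-1) 1 := cosPartialHomeomorph.image_source_eq_target
  rw [intervalIntegral.integral_of_le (by norm_num), intervalIntegral.integral_of_le pi_pos.le,
    integral_Ioc_eq_integral_Ioo, integral_Ioc_eq_integral_Ioo, ← himage,
    integral_image_eq_integral_abs_deriv_smul measurableSet_Ioo
      (fun θ _ => (hasDerivAt_cos θ).hasDerivWithinAt) (injOn_cos.mono Set.Ioo_subset_Icc_self)]
  refine setIntegral_congr_fun measurableSet_Ioo fun θ hθ => ?_
  have hsin : 0 < sin θ := sin_pos_of_pos_of_lt_pi hθ.1 hθ.2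
  rw [← sin_sq, sqrt_sq hsin.le, abs_neg, abs_of_pos hsin, smul_eq_mul, mul_div_cancel₀ _ hsin.ne']

lemma integral_comp_cos_zero_two_pi {F : ℝ → ℝ} (hF : Continuous F) :
    ∫ θ in (0:ℝ)..2 * π, F (cos θ) = 2 * ∫ θ in (0:ℝ)..π, F (cos θ) := by
  have hint (a b : ℝ) : IntervalIntegrable (fun θ => F (cos θ)) volume a b :=
    (hF.comp continuous_cos).intervalIntegrable a b
  have hreflect : ∫ θ in π..2 * π, F (cos θ) = ∫ θ in (0:ℝ)..π, F (cos θ) := by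
    have := intervalIntegral.integral_comp_sub_left (fun θ => F (cos θ)) (2 * π) (a := 0) (b := π)
    simp only [cos_two_pi_sub, sub_zero, show 2 * π - π = π by ring] at this
    exact this.symm
  rw [← intervalIntegral.integral_add_adjacent_intervals (hint 0 π) (hint π (2 * π)), hreflect,
    two_mul]

lemma integral_exp_mul_I_pow_mul_exp_neg_mul_I_pow (m n : ℕ) :
    ∫ θ in (0:ℝ)..2 * π, Complex.exp (θ * Complex.I) ^ m * Complex.exp (-(θ * Complex.I)) ^ n
      = if m = n then (2 * π : ℂ) else 0 := by
  have hrw (θ : ℝ) : Complex.exp (θ * Complex.I) ^ m * Complex.exp (-(θ * Complex.I)) ^ n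
      = Complex.exp (((m - n : ℤ) * Complex.I) * θ) := by
    rw [← Complex.exp_nat_mul, ← Complex.exp_nat_mul, ← Complex.exp_add]
    push_cast
    ring_nf
  simp only [hrw]
  split_ifs with hmn
  · simp [hmn]
  · have hc : ((m - n : ℤ) * Complex.I) ≠ 0 := by
      simpa [sub_eq_zero] using hmn
    rw [integral_exp_mul_complex hc, mul_comm _ ((2 * π : ℝ) : ℂ), ← mul_assoc]
    push_cast
    rw [show 2 * π * (m - n : ℂ) * Complex.I = (m - n : ℤ) * (2 * π * Complex.I) by push_cast; ring,
      Complex.exp_int_mul_two_pi_mul_I]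
    simp

lemma integral_sum_exp_mul_I_pow_mul_sum_exp_neg_mul_I_pow (N : ℕ) (a b : ℕ → ℂ) :
    ∫ θ in (0:ℝ)..2 * π, (∑ m ∈ range N, a m * Complex.exp (θ * Complex.I) ^ m) *
        ∑ n ∈ range N, b n * Complex.exp (-(θ * Complex.I)) ^ n
      = 2 * π * ∑ m ∈ range N, a m * b m := by
  have hcont (m n : ℕ) : Continuous fun θ : ℝ =>
      a m * b n * (Complex.exp (θ * Complex.I) ^ m * Complex.exp (-(θ * Complex.I)) ^ n) := by
    fun_prop
  simp_rw [sum_mul_sum, mul_mul_mul_comm]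
  rw [intervalIntegral.integral_finsetSum fun m _ =>
    (continuous_finsetSum _ fun n _ => hcont m n).intervalIntegrable _ _, mul_sum]
  refine sum_congr rfl fun m hm => ?_
  rw [intervalIntegral.integral_finsetSum fun n _ => (hcont m n).intervalIntegrable _ _]
  simp_rw [intervalIntegral.integral_const_mul, integral_exp_mul_I_pow_mul_exp_neg_mul_I_pow,
    mul_ite, mul_zero, sum_ite_eq, if_pos hm]
  ring

lemma integral_sq_add_two_mul_mul_cos_add_sq_pow (z w : ℝ) (k : ℕ) :
    ∫ θ in (0:ℝ)..2 * π, (z ^ 2 + 2 * z * w * cos θ + w ^ 2) ^ k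
      = 2 * π * ∑ m ∈ range (k + 1), (k.choose m : ℝ) ^ 2 * z ^ (2 * m) * w ^ (2 * (k - m)) := by
  set c : ℕ → ℂ := fun m => k.choose m * z ^ m * w ^ (k - m)
  have hbinom (ζ : ℂ) : (z * ζ + w) ^ k = ∑ m ∈ range (k + 1), c m * ζ ^ m := by
    rw [add_pow]
    exact sum_congr rfl fun m _ => by ring
  have hfactor (θ : ℝ) : ((z ^ 2 + 2 * z * w * cos θ + w ^ 2) ^ k : ℝ)
      = (∑ m ∈ range (k + 1), c m * Complex.exp (θ * Complex.I) ^ m) *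
        ∑ n ∈ range (k + 1), c n * Complex.exp (-(θ * Complex.I)) ^ n := by
    rw [← hbinom, ← hbinom, ← mul_pow]
    have hcos :
        2 * Complex.cos θ = Complex.exp (θ * Complex.I) + Complex.exp (-(θ * Complex.I)) := by
      rw [Complex.two_cos, neg_mul]
    have hinv : Complex.exp (θ * Complex.I) * Complex.exp (-(θ * Complex.I)) = 1 := by
      rw [← Complex.exp_add, add_neg_cancel, Complex.exp_zero]
    push_cast
    congr 1
    linear_combination (z * w : ℂ) * hcos - (z : ℂ) ^ 2 * hinv
  rw [← Complex.ofReal_inj, ← intervalIntegral.integral_ofReal]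
  simp_rw [hfactor]
  rw [integral_sum_exp_mul_I_pow_mul_sum_exp_neg_mul_I_pow]
  push_cast
  exact congrArg _ (sum_congr rfl fun m _ => by ring)

lemma integral_pow_mul_arcsine_density (u h : ℝ) (hu : 0 ≤ u) (hh : 0 ≤ h) (k : ℕ) :
    ∫ s in (-1:ℝ)..1, (u + 2 * √(u * h) * s + h) ^ k * (1 / (π * √(1 - s ^ 2)))
      = ∑ m ∈ range (k + 1), (k.choose m : ℝ) ^ 2 * h ^ (k - m) * u ^ m := by
  set F : ℝ → ℝ := fun s => (u + 2 * √(u * h) * s + h) ^ k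
  have hF : Continuous F := by fun_prop
  have hFcos (θ : ℝ) : F (cos θ) = (√u ^ 2 + 2 * √u * √h * cos θ + √h ^ 2) ^ k := by
    simp only [F, sq_sqrt hu, sq_sqrt hh, sqrt_mul hu]
    ring
  have hsqrt_pow (x : ℝ) (hx : 0 ≤ x) (m : ℕ) : √x ^ (2 * m) = x ^ m := by
    rw [pow_mul, sq_sqrt hx]
  calc ∫ s in (-1:ℝ)..1, F s * (1 / (π * √(1 - s ^ 2)))
      = π⁻¹ * ∫ s in (-1:ℝ)..1, F s / √(1 - s ^ 2) := by
        rw [← intervalIntegral.integral_const_mul]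
        congr 1 with s
        field_simp
    _ = π⁻¹ * (2⁻¹ * ∫ θ in (0:ℝ)..2 * π, F (cos θ)) := by
        rw [integral_div_sqrt_one_sub_sq_eq_integral_comp_cos, integral_comp_cos_zero_two_pi hF,
          inv_mul_cancel_left₀ two_ne_zero]
    _ = _ := by
        simp_rw [hFcos, integral_sq_add_two_mul_mul_cos_add_sq_pow, hsqrt_pow u hu, hsqrt_pow h hh]
        field_simp
        exact sum_congr rfl fun m _ => by ring

theorem stmt_14 (h : ℝ) (hh : 0 < h) (k : ℕ) :
    ∫ u in (0:ℝ)..1, ∫ s in (-1:ℝ)..1,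
        (u + 2 * Real.sqrt (u * h) * s + h) ^ k * (1 / (π * Real.sqrt (1 - s ^ 2)))
      = h ^ k * ∑ m ∈ Finset.range (k + 1),
          (k.choose m : ℝ) ^ 2 * h ^ (-(m : ℤ)) / (m + 1) := by
  have hinner : Set.EqOn
      (fun u => ∫ s in (-1:ℝ)..1,
        (u + 2 * Real.sqrt (u * h) * s + h) ^ k * (1 / (π * Real.sqrt (1 - s ^ 2))))
      (fun u => ∑ m ∈ range (k + 1), (k.choose m : ℝ) ^ 2 * h ^ (k - m) * u ^ m) (Set.uIcc 0 1) :=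
    fun u hu =>
      integral_pow_mul_arcsine_density u h (Set.uIcc_of_le (zero_le_one' ℝ) ▸ hu).1
        hh.le k
  rw [intervalIntegral.integral_congr hinner, intervalIntegral.integral_finsetSum
    fun m _ => ((continuous_pow m).intervalIntegrable 0 1).const_mul _, mul_sum]
  refine sum_congr rfl fun m hm => ?_
  rw [intervalIntegral.integral_const_mul, integral_pow,
    pow_sub₀ h hh.ne' (Nat.lt_succ_iff.mp (mem_range.mp hm)), zpow_neg, zpow_natCast]
  field_simp
  ring
end

section
/- For 0 < q < 1 and natural number k: ∫_0^1 ∫_{-1}^1 (u(1+q+2√q·s)/(1-q))^k · (1/(π√(1-s²))) ds du = (1/(k+1))·(q/(1-q))^k·∑_{j=0}^{k} C(k,j)²·q^{-j}. -/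
/-!
Substituting `s = cos θ` turns the arcsine density into `dθ / π` on `[0, π]`, and
`1 + q + 2√q cos θ = |1 + √q e^{iθ}|²`, so the `k`-th power is the trigonometric polynomial
`∑_{a,b} C(k,a) C(k,b) q^{(a+b)/2} cos((a-b)θ)`, whose mean over `[0, π]` is its constant term
`∑_j C(k,j)² q^j`. The `u`-integral contributes `1/(k+1)`, and reversing the sum
(`C(k,j) = C(k,k-j)`) turns `∑_j C(k,j)² q^j` into `q^k ∑_j C(k,j)² q^{-j}`.
-/

open Real Finset

lemma integral_cos_intCast_mul (n : ℤ) :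
    ∫ θ in (0:ℝ)..π, cos (n * θ) = if n = 0 then π else 0 := by
  rcases eq_or_ne n 0 with rfl | hn
  · simp
  · rw [if_neg hn, intervalIntegral.integral_comp_mul_left (fun x => cos x)
      (Int.cast_ne_zero.mpr hn)]
    simp [integral_cos, sin_int_mul_pi]

lemma one_add_ofReal_mul_exp_pow (r φ : ℝ) (k : ℕ) :
    (1 + r * Complex.exp (φ * Complex.I)) ^ k
      = ∑ a ∈ range (k + 1), (k.choose a * r ^ a : ℝ) * Complex.exp ((a * φ : ℝ) * Complex.I) := by
  rw [add_comm, add_pow]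
  refine sum_congr rfl fun a _ => ?_
  rw [one_pow, mul_one, mul_pow, ← Complex.exp_nat_mul]
  push_cast
  ring_nf

lemma one_add_sq_add_two_mul_cos_pow (r θ : ℝ) (k : ℕ) :
    (1 + r ^ 2 + 2 * r * cos θ) ^ k
      = ∑ a ∈ range (k + 1), ∑ b ∈ range (k + 1),
          (k.choose a : ℝ) * k.choose b * r ^ (a + b) * cos (((a - b : ℤ) : ℝ) * θ) := by
  have hfactor : ((1 + r ^ 2 + 2 * r * cos θ : ℝ) : ℂ)
      = (1 + r * Complex.exp (θ * Complex.I)) * (1 + r * Complex.exp ((-θ : ℝ) * Complex.I)) := by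
    have hinv : Complex.exp (θ * Complex.I) * Complex.exp ((-θ : ℝ) * Complex.I) = 1 := by
      rw [← Complex.exp_add]; push_cast; ring_nf; exact Complex.exp_zero
    push_cast at hinv ⊢
    rw [Complex.cos]
    linear_combination -(r : ℂ) ^ 2 * hinv
  have hre := congrArg Complex.re (congrArg (· ^ k) hfactor)
  simp only [← Complex.ofReal_pow, Complex.ofReal_re] at hre
  rw [hre, mul_pow, one_add_ofReal_mul_exp_pow, one_add_ofReal_mul_exp_pow, sum_mul_sum,
    Complex.re_sum]
  refine sum_congr rfl fun a _ => ?_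
  rw [Complex.re_sum]
  refine sum_congr rfl fun b _ => ?_
  rw [mul_mul_mul_comm, ← Complex.exp_add, ← Complex.ofReal_mul, ← add_mul, ← Complex.ofReal_add,
    Complex.re_ofReal_mul, Complex.exp_ofReal_mul_I_re]
  push_cast
  ring_nf

lemma integral_one_add_sq_add_two_mul_cos_pow (r : ℝ) (k : ℕ) :
    ∫ θ in (0:ℝ)..π, (1 + r ^ 2 + 2 * r * cos θ) ^ k
      = π * ∑ j ∈ range (k + 1), (k.choose j : ℝ) ^ 2 * r ^ (2 * j) := by
  simp_rw [one_add_sq_add_two_mul_cos_pow]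
  rw [intervalIntegral.integral_finsetSum fun a _ =>
    (by fun_prop : Continuous _).intervalIntegrable _ _, mul_sum]
  refine sum_congr rfl fun a ha => ?_
  rw [intervalIntegral.integral_finsetSum fun b _ =>
    (by fun_prop : Continuous _).intervalIntegrable _ _]
  simp_rw [intervalIntegral.integral_const_mul, integral_cos_intCast_mul, sub_eq_zero, Nat.cast_inj,
    mul_ite, mul_zero, sum_ite_eq, if_pos ha]
  ring

lemma integral_div_sqrt_one_sub_sq (f : ℝ → ℝ) :
    ∫ s in (-1:ℝ)..1, f s / √(1 - s ^ 2) = ∫ θ in (0:ℝ)..π, f (cos θ) := by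
  have hcos : ∫ s in cos '' Set.Ioo 0 π, f s / √(1 - s ^ 2)
      = ∫ θ in Set.Ioo 0 π, |-sin θ| • (f (cos θ) / √(1 - cos θ ^ 2)) :=
    MeasureTheory.integral_image_eq_integral_abs_deriv_smul measurableSet_Ioo
      (fun θ _ => (hasDerivAt_cos θ).hasDerivWithinAt) (injOn_cos.mono Set.Ioo_subset_Icc_self) _
  have hjac : Set.EqOn (fun θ => |-sin θ| • (f (cos θ) / √(1 - cos θ ^ 2))) (fun θ => f (cos θ))
      (Set.Ioo 0 π) := fun θ hθ => by
    have hsin : 0 < sin θ := sin_pos_of_pos_of_lt_pi hθ.1 hθ.2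
    simp only [smul_eq_mul, abs_neg, abs_of_pos hsin, ← sin_sq, sqrt_sq hsin.le]
    field_simp
  have himage : cos '' Set.Ioo 0 π = Set.Ioo (-1) 1 := by
    simpa using cosPartialHomeomorph.image_source_eq_target
  rw [intervalIntegral.integral_of_le (by norm_num), intervalIntegral.integral_of_le pi_pos.le,
    MeasureTheory.integral_Ioc_eq_integral_Ioo, MeasureTheory.integral_Ioc_eq_integral_Ioo,
    ← himage, hcos, MeasureTheory.setIntegral_congr_fun measurableSet_Ioo hjac]

lemma integral_one_add_sq_add_two_mul_pow_div_sqrt (r : ℝ) (k : ℕ) :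
    ∫ s in (-1:ℝ)..1, (1 + r ^ 2 + 2 * r * s) ^ k / √(1 - s ^ 2)
      = π * ∑ j ∈ range (k + 1), (k.choose j : ℝ) ^ 2 * r ^ (2 * j) := by
  rw [integral_div_sqrt_one_sub_sq (fun s => (1 + r ^ 2 + 2 * r * s) ^ k),
    integral_one_add_sq_add_two_mul_cos_pow]

lemma sum_choose_sq_mul_zpow_neg {K : Type*} [Field K] {x : K} (hx : x ≠ 0) (k : ℕ) :
    ∑ j ∈ range (k + 1), (k.choose j : K) ^ 2 * x ^ (-(j : ℤ))
      = (∑ j ∈ range (k + 1), (k.choose j : K) ^ 2 * x ^ j) / x ^ k := by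
  rw [eq_div_iff (pow_ne_zero k hx), sum_mul, ← sum_range_reflect _ (k + 1)]
  refine sum_congr rfl fun j hj => ?_
  have hjk : j ≤ k := Nat.lt_succ_iff.mp (mem_range.mp hj)
  rw [Nat.add_sub_cancel, Nat.choose_symm hjk, mul_assoc, ← zpow_natCast x k, ← zpow_add₀ hx,
    show -((k - j : ℕ) : ℤ) + k = j by omega, zpow_natCast]

theorem stmt_15_general (q : ℝ) (hq0 : 0 < q) (k : ℕ) :
    ∫ u in (0:ℝ)..1, ∫ s in (-1:ℝ)..1,
        (u * (1 + q + 2 * Real.sqrt q * s) / (1 - q)) ^ k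
          * (1 / (π * Real.sqrt (1 - s ^ 2)))
      = (1 / ((k : ℝ) + 1)) * (q / (1 - q)) ^ k
          * ∑ j ∈ Finset.range (k + 1), (k.choose j : ℝ) ^ 2 * q ^ (-(j : ℤ)) := by
  set S := ∑ j ∈ range (k + 1), (k.choose j : ℝ) ^ 2 * q ^ j with hS_def
  have hS : ∫ s in (-1:ℝ)..1, (1 + q + 2 * √q * s) ^ k / √(1 - s ^ 2) = π * S := by
    simpa only [sq_sqrt hq0.le, pow_mul] using integral_one_add_sq_add_two_mul_pow_div_sqrt √q k
  have hinner (u : ℝ) : ∫ s in (-1:ℝ)..1, (u * (1 + q + 2 * √q * s) / (1 - q)) ^ k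
      * (1 / (π * √(1 - s ^ 2))) = u ^ k * (S / (1 - q) ^ k) := by
    calc _ = ∫ s in (-1:ℝ)..1, u ^ k / ((1 - q) ^ k * π)
            * ((1 + q + 2 * √q * s) ^ k / √(1 - s ^ 2)) :=
          intervalIntegral.integral_congr fun s _ => by rw [div_pow, mul_pow]; ring
      _ = _ := by
          rw [intervalIntegral.integral_const_mul, hS]
          field_simp
  simp_rw [hinner]
  rw [intervalIntegral.integral_mul_const, integral_pow, sum_choose_sq_mul_zpow_neg hq0.ne',
    ← hS_def, div_pow]
  field_simp
  ring

theorem stmt_15 (q : ℝ) (hq0 : 0 < q) (hq1 : q < 1) (k : ℕ) :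
    ∫ u in (0:ℝ)..1, ∫ s in (-1:ℝ)..1,
        (u * (1 + q + 2 * Real.sqrt q * s) / (1 - q)) ^ k
          * (1 / (π * Real.sqrt (1 - s ^ 2)))
      = (1 / ((k : ℝ) + 1)) * (q / (1 - q)) ^ k
          * ∑ j ∈ Finset.range (k + 1), (k.choose j : ℝ) ^ 2 * q ^ (-(j : ℤ)) :=
  stmt_15_general q hq0 k
end

section
/- For natural numbers k, m with m ≤ k: C(k,m)·C(k,k−m) = ∑_{j=0}^{min(m,k−m)} C(m,j)·C(k−j,k−m−j)·C(k,k−j). -/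
/-!
Trinomial revision `C(k, k-j) C(k-j, m) = C(k, m) C(k-m, j)` turns the `j`-th summand into
`C(k, m) C(m, j) C(k-m, j)`, and Vandermonde's identity sums `C(m, j) C(k-m, j)` to `C(k, m)`.
-/

open Finset

namespace Nat

theorem choose_mul_choose_sub_comm (n a b : ℕ) :
    n.choose a * (n - a).choose b = n.choose b * (n - b).choose a := by
  have ha := choose_mul (n := n) (le_add_right a b)
  have hb := choose_mul (n := n) (le_add_left b a)
  rw [Nat.add_sub_cancel_left] at ha
  rw [Nat.add_sub_cancel] at hb
  rw [← ha, ← hb, choose_symm_add]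

theorem sum_range_choose_mul_choose (m n : ℕ) :
    ∑ j ∈ range (n + 1), m.choose j * n.choose j = (m + n).choose n := by
  rw [add_choose_eq, Finset.Nat.sum_antidiagonal_eq_sum_range_succ_mk]
  refine sum_congr rfl fun j hj => ?_
  rw [choose_symm (mem_range_succ_iff.mp hj)]

theorem sum_range_min_choose_mul_choose (m n : ℕ) :
    ∑ j ∈ range (min m n + 1), m.choose j * n.choose j = (m + n).choose n := by
  rw [← sum_range_choose_mul_choose]
  refine sum_subset (range_subset_range.mpr (by omega)) fun j hj hj' => ?_
  simp only [mem_range] at hj hj'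
  rw [choose_eq_zero_of_lt (by omega : m < j), zero_mul]

theorem choose_mul_choose_sub_sub_mul_choose_sub {k m j : ℕ} (h : j + m ≤ k) :
    m.choose j * (k - j).choose (k - m - j) * k.choose (k - j)
      = k.choose m * (m.choose j * (k - m).choose j) := by
  rw [show k - m - j = k - j - m by omega, choose_symm (by omega : m ≤ k - j),
    choose_symm (by omega : j ≤ k)]
  calc m.choose j * (k - j).choose m * k.choose j
      = m.choose j * (k.choose j * (k - j).choose m) := by ring
    _ = k.choose m * (m.choose j * (k - m).choose j) := by
      rw [choose_mul_choose_sub_comm]; ring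

end Nat

theorem stmt_17 (k m : ℕ) (hm : m ≤ k) :
    k.choose m * k.choose (k - m)
      = ∑ j ∈ Finset.range (min m (k - m) + 1),
          m.choose j * (k - j).choose (k - m - j) * k.choose (k - j) := by
  calc k.choose m * k.choose (k - m)
      = k.choose m * ∑ j ∈ range (min m (k - m) + 1), m.choose j * (k - m).choose j := by
        rw [Nat.sum_range_min_choose_mul_choose, Nat.add_sub_cancel' hm]
    _ = _ := by
        rw [mul_sum]
        refine sum_congr rfl fun j hj => ?_
        rw [Nat.choose_mul_choose_sub_sub_mul_choose_sub]
        simp only [mem_range] at hj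
        omega
end

section
/- For natural number k and real h > 0: ∑_{m=0}^{k} C(k,m)²·h^{-m}/(m+1) = ∑_{j=0}^{⌊k/2⌋} ∑_{l=0}^{k-2j} (k!/((j!)²·l!·(k-2j-l)!))·h^{-j-l}/(j+l+1). -/
/-!
Vandermonde's identity gives `C(k,m)² = ∑_j C(k,m) C(m,j) C(k-m,j)`, and with `l = m - j` the summand
`C(k,j+l) C(j+l,j) C(k-j-l,j)` is the coefficient `k! / (j!² l! (k-2j-l)!)`. Exchanging the order of
summation over the triangle `j + l ≤ k` and dropping the terms with `2j + l > k`, which vanish, gives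
the right-hand side.
-/

open Finset Nat

theorem Nat.sum_range_choose_mul_choose_s18 (m n : ℕ) :
    ∑ j ∈ range (m + 1), m.choose j * n.choose j = (m + n).choose m := by
  rw [Nat.add_choose_eq, Nat.sum_antidiagonal_eq_sum_range_succ (fun i j => m.choose i * n.choose j),
    ← sum_range_reflect]
  refine sum_congr rfl fun j hj => ?_
  rw [Nat.add_sub_cancel, Nat.choose_symm (Nat.lt_succ_iff.mp (mem_range.mp hj))]

theorem Nat.choose_sq_eq_sum {k m : ℕ} (hm : m ≤ k) :
    k.choose m ^ 2 = ∑ j ∈ range (m + 1), k.choose m * m.choose j * (k - m).choose j := by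
  simp_rw [mul_assoc, ← mul_sum, Nat.sum_range_choose_mul_choose_s18, Nat.add_sub_cancel' hm, sq]

theorem Finset.sum_range_triangle_eq_of_vanish {M : Type*} [AddCommMonoid M] (k : ℕ)
    (F : ℕ → ℕ → M) (hF : ∀ j l, k < 2 * j + l → F j l = 0) :
    ∑ j ∈ range (k + 1), ∑ l ∈ range (k + 1 - j), F j l
      = ∑ j ∈ range (k / 2 + 1), ∑ l ∈ range (k - 2 * j + 1), F j l :=
  calc ∑ j ∈ range (k + 1), ∑ l ∈ range (k + 1 - j), F j l
      = ∑ j ∈ range (k + 1), ∑ l ∈ range (k - 2 * j + 1), F j l := by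
        refine sum_congr rfl fun j hj => (sum_subset ?_ fun l hl hl' => hF j l ?_).symm
        · exact range_subset_range.mpr (by rw [mem_range] at hj; omega)
        · rw [mem_range] at hl hl'; omega
    _ = ∑ j ∈ range (k / 2 + 1), ∑ l ∈ range (k - 2 * j + 1), F j l := by
        refine (sum_subset (range_subset_range.mpr (by omega)) fun j _ hj => ?_).symm
        exact sum_eq_zero fun l _ => hF j l (by rw [mem_range] at hj; omega)

theorem Nat.choose_mul_choose_mul_choose_eq_zero {k j l : ℕ} (h : k < 2 * j + l) :
    k.choose (j + l) * (j + l).choose j * (k - (j + l)).choose j = 0 := by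
  rcases lt_or_ge k (j + l) with hk | hk
  · rw [Nat.choose_eq_zero_of_lt hk, zero_mul, zero_mul]
  · rw [Nat.choose_eq_zero_of_lt (by omega : k - (j + l) < j), mul_zero]

theorem Finset.sum_range_choose_sq_nsmul {M : Type*} [AddCommMonoid M] (k : ℕ) (f : ℕ → M) :
    ∑ m ∈ range (k + 1), k.choose m ^ 2 • f m
      = ∑ j ∈ range (k / 2 + 1), ∑ l ∈ range (k - 2 * j + 1),
          (k.choose (j + l) * (j + l).choose j * (k - (j + l)).choose j) • f (j + l) :=
  calc ∑ m ∈ range (k + 1), k.choose m ^ 2 • f m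
      = ∑ m ∈ range (k + 1), ∑ j ∈ range (m + 1),
          (k.choose (j + (m - j)) * (j + (m - j)).choose j * (k - (j + (m - j))).choose j)
            • f (j + (m - j)) := by
        refine sum_congr rfl fun m hm => ?_
        rw [Nat.choose_sq_eq_sum (Nat.lt_succ_iff.mp (mem_range.mp hm)), sum_smul]
        refine sum_congr rfl fun j hj => ?_
        rw [Nat.add_sub_cancel' (Nat.lt_succ_iff.mp (mem_range.mp hj))]
    _ = _ := sum_range_diag_flip (k + 1) fun j l =>
          (k.choose (j + l) * (j + l).choose j * (k - (j + l)).choose j) • f (j + l)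
    _ = _ := sum_range_triangle_eq_of_vanish k _ fun j l h => by
          rw [Nat.choose_mul_choose_mul_choose_eq_zero h, zero_smul]

theorem Nat.cast_choose_mul_choose_mul_choose {K : Type*} [Field K] [CharZero K] {k j l : ℕ}
    (h : 2 * j + l ≤ k) :
    ((k.choose (j + l) * (j + l).choose j * (k - (j + l)).choose j : ℕ) : K)
      = k ! / ((j ! : K) ^ 2 * l ! * (k - 2 * j - l)!) := by
  have hf (n : ℕ) : (n ! : K) ≠ 0 := Nat.cast_ne_zero.mpr n.factorial_ne_zero
  have hl : j + l - j = l := by omega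
  have hr : k - (j + l) - j = k - 2 * j - l := by omega
  push_cast
  rw [Nat.cast_choose K (by omega : j + l ≤ k), Nat.cast_choose K (by omega : j ≤ j + l),
    Nat.cast_choose K (by omega : j ≤ k - (j + l)), hl, hr]
  field_simp
  rw [div_eq_div_iff (by simp [hf]) (by simp [hf])]
  ring

theorem stmt_18_general (k : ℕ) (h : ℝ) :
    ∑ m ∈ Finset.range (k + 1), (k.choose m : ℝ) ^ 2 * h ^ (-(m : ℤ)) / (m + 1)
      = ∑ j ∈ Finset.range (k / 2 + 1), ∑ l ∈ Finset.range (k - 2 * j + 1),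
          ((k.factorial : ℝ)
              / ((j.factorial : ℝ) ^ 2 * l.factorial * (k - 2 * j - l).factorial))
            * h ^ (-((j : ℤ) + l)) / ((j : ℝ) + l + 1) := by
  have key := sum_range_choose_sq_nsmul k fun m => h ^ (-(m : ℤ)) / ((m : ℝ) + 1)
  simp only [nsmul_eq_mul, Nat.cast_pow, ← mul_div_assoc] at key
  rw [key]
  refine sum_congr rfl fun j hj => sum_congr rfl fun l hl => ?_
  simp only [mem_range] at hj hl
  rw [Nat.cast_choose_mul_choose_mul_choose (by omega)]
  push_cast
  ring

theorem stmt_18 (k : ℕ) (h : ℝ) (hh : 0 < h) :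
    ∑ m ∈ Finset.range (k + 1), (k.choose m : ℝ) ^ 2 * h ^ (-(m : ℤ)) / (m + 1)
      = ∑ j ∈ Finset.range (k / 2 + 1), ∑ l ∈ Finset.range (k - 2 * j + 1),
          ((k.factorial : ℝ)
              / ((j.factorial : ℝ) ^ 2 * l.factorial * (k - 2 * j - l).factorial))
            * h ^ (-((j : ℤ) + l)) / ((j : ℝ) + l + 1) :=
  stmt_18_general k h
end

section
/- For natural numbers k, j with j ≤ k and real x with |x| < 1: ∑_{l=0}^{∞} ((l+2)_j·(2)_l/((l+k+2)_j·l!))·x^l = ((j+1)!·(k+1)!/(j+k+1)!)·₂F₁(k+2, j+2; k+j+2; x), and moreover lim_{x→1⁻} (1−x)²·₂F₁(k+2, j+2; k+j+2; x) = (j+k+1)!/((j+1)!·(k+1)!). -/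
/-!
Put `R l = (l + 2)_j / (l + k + 2)_j`. Writing rising factorials at integers as quotients of
factorials, the coefficient of the first series is `(l + 1) R l` and that of `₂F₁` is
`(j + k + 1)! / ((j + 1)! (k + 1)!)` times it, which gives the identity termwise. For the limit,
`R l → 1` and the weights `(1 - x)² (l + 1) x ^ l` are nonnegative, have total mass `1`, and tend
to `0` one by one as `x → 1⁻`; hence `(1 - x)² ∑ (l + 1) R l x ^ l → 1`, an Abelian theorem that
replaces Euler's transformation and Gauss's summation.
-/

open Finset Filter

/-- `₂F₁(a,b;c;x)` as a real power series (sum of the hypergeometric series). -/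
noncomputable def F21 (a b c x : ℝ) : ℝ :=
  ∑' i : ℕ, rf a i * rf b i / (rf c i * i.factorial) * x ^ i

open Topology
open scoped Nat

lemma rf_natCast (n m : ℕ) : rf n m = n.ascFactorial m := by
  simp [rf, Nat.ascFactorial_eq_prod_range]

lemma rf_natCast_add_two (n m : ℕ) : rf (n + 2) m = (n + m + 1)! / (n + 1)! := by
  have h := Nat.factorial_mul_ascFactorial (n + 1) m
  rw [eq_div_iff (by positivity), mul_comm, show (n : ℝ) + 2 = (n + 1 + 1 : ℕ) by push_cast; ring,
    rf_natCast, show n + m + 1 = n + 1 + m by ring]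
  exact_mod_cast h

lemma rf_two (n : ℕ) : rf 2 n = (n + 1)! := by
  simpa using rf_natCast_add_two 0 n

lemma rf_pos {a : ℝ} (ha : 0 < a) (n : ℕ) : 0 < rf a n :=
  prod_pos fun i _ => by positivity

lemma tendsto_rf_add_div_rf_add (a b : ℝ) (m : ℕ) :
    Tendsto (fun n : ℕ => rf (n + a) m / rf (n + b) m) atTop (𝓝 1) := by
  simp only [rf, ← prod_div_distrib]
  rw [← prod_const_one (s := range m)]
  refine tendsto_finsetProd _ fun i _ => ?_
  convert tendsto_add_mul_div_add_mul_atTop_nhds (a + i) (b + i) 1 one_ne_zero using 2 <;> ring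

lemma hasSum_succ_mul_geometric {x : ℝ} (hx : |x| < 1) :
    HasSum (fun n : ℕ => (n + 1) * x ^ n) ((1 - x) ^ 2)⁻¹ := by
  simpa using hasSum_choose_mul_geometric_of_norm_lt_one 1 (r := x) hx

lemma summable_succ_mul_mul_pow {R : ℕ → ℝ} {C x : ℝ} (hC : ∀ n, |R n| ≤ C) (hx : |x| < 1) :
    Summable fun n : ℕ => (n + 1) * R n * x ^ n := by
  refine .of_norm_bounded ((hasSum_succ_mul_geometric (by rwa [abs_abs])).summable.mul_left C)
    fun n => ?_
  calc ‖(n + 1) * R n * x ^ n‖ = (n + 1) * |R n| * |x| ^ n := by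
        simp [abs_of_nonneg (by positivity : (0 : ℝ) ≤ n + 1)]
    _ ≤ (n + 1) * C * |x| ^ n := by gcongr; exact hC n
    _ = C * ((n + 1) * |x| ^ n) := by ring

lemma tendsto_one_sub_sq_mul_tsum_of_tendsto_zero {R : ℕ → ℝ} (hR : Tendsto R atTop (𝓝 0)) :
    Tendsto (fun x : ℝ => (1 - x) ^ 2 * ∑' n : ℕ, (n + 1) * R n * x ^ n) (𝓝[<] 1) (𝓝 0) := by
  rw [Metric.tendsto_nhds]
  intro ε hε
  obtain ⟨N, hN⟩ := Metric.tendsto_atTop.1 hR (ε / 2) (half_pos hε)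
  set S := ∑ n ∈ range N, (n + 1 : ℝ) * |R n|
  have hS : Tendsto (fun x : ℝ => (1 - x) ^ 2 * S) (𝓝[<] 1) (𝓝 0) := by
    exact tendsto_nhdsWithin_of_tendsto_nhds <|
      (by fun_prop : Continuous fun x : ℝ => (1 - x) ^ 2 * S).tendsto' 1 0 (by simp)
  filter_upwards [hS.eventually (gt_mem_nhds (half_pos hε)), Ioo_mem_nhdsLT one_pos]
    with x hxS ⟨hx0, hx1⟩
  have hhead : HasSum (fun n : ℕ => if n < N then (n + 1 : ℝ) * |R n| else 0) S := by
    have h : HasSum (fun n : ℕ => if n < N then (n + 1 : ℝ) * |R n| else 0)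
        (∑ n ∈ range N, if n < N then (n + 1 : ℝ) * |R n| else 0) :=
      hasSum_sum_of_ne_finset_zero fun n hn => if_neg (by simpa using hn)
    rwa [sum_congr rfl fun n hn => if_pos (mem_range.1 hn)] at h
  -- for `n ≥ N` the term is at most `ε / 2` times the weight `(n + 1) x ^ n`
  have hbound : ‖∑' n : ℕ, (n + 1) * R n * x ^ n‖ ≤ ε / 2 * ((1 - x) ^ 2)⁻¹ + S := by
    refine tsum_of_norm_bounded
      (((hasSum_succ_mul_geometric (abs_lt.2 ⟨by linarith, hx1⟩)).mul_left (ε / 2)).add hhead)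
      fun n => ?_
    have hxn : x ^ n ≤ 1 := pow_le_one₀ hx0.le hx1.le
    rw [norm_mul, norm_mul, Real.norm_eq_abs, Real.norm_eq_abs, norm_pow, Real.norm_eq_abs,
      abs_of_pos hx0, abs_of_nonneg (by positivity : (0 : ℝ) ≤ n + 1)]
    split_ifs with hn
    · have : (n + 1) * |R n| * x ^ n ≤ (n + 1) * |R n| := mul_le_of_le_one_right (by positivity) hxn
      have : 0 ≤ ε / 2 * ((n + 1) * x ^ n) := by positivity
      linarith
    · have hRn : |R n| ≤ ε / 2 := by simpa using (hN n (not_lt.1 hn)).le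
      have : 0 ≤ (n + 1 : ℝ) * x ^ n := by positivity
      nlinarith
  have hx : (1 - x) ^ 2 ≠ 0 := by positivity
  rw [dist_zero_right, norm_mul, norm_pow, Real.norm_eq_abs, sq_abs]
  calc (1 - x) ^ 2 * ‖∑' n : ℕ, (n + 1) * R n * x ^ n‖
      ≤ (1 - x) ^ 2 * (ε / 2 * ((1 - x) ^ 2)⁻¹ + S) := by gcongr
    _ = ε / 2 + (1 - x) ^ 2 * S := by field_simp
    _ < ε := by linarith

lemma tendsto_one_sub_sq_mul_tsum {R : ℕ → ℝ} {L : ℝ} (hR : Tendsto R atTop (𝓝 L)) :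
    Tendsto (fun x : ℝ => (1 - x) ^ 2 * ∑' n : ℕ, (n + 1) * R n * x ^ n) (𝓝[<] 1) (𝓝 L) := by
  obtain ⟨C, hC⟩ := hR.abs.bddAbove_range
  have hR0 : Tendsto (fun n => R n - L) atTop (𝓝 0) := by simpa using hR.sub_const L
  refine (tendsto_one_sub_sq_mul_tsum_of_tendsto_zero hR0 |>.add_const L |>.congr' ?_).trans ?_
  · filter_upwards [Ioo_mem_nhdsLT (neg_lt_self one_pos)] with x ⟨hx0, hx1⟩
    have hx : |x| < 1 := abs_lt.2 ⟨hx0, hx1⟩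
    have hL := (hasSum_succ_mul_geometric hx).mul_right L
    have h := (summable_succ_mul_mul_pow (fun n => hC ⟨n, rfl⟩) hx).hasSum.sub hL
    have : (1 - x) ^ 2 ≠ 0 := by nlinarith
    rw [show (fun n : ℕ => (n + 1) * (R n - L) * x ^ n)
        = fun n : ℕ => (n + 1) * R n * x ^ n - (n + 1) * x ^ n * L from funext fun n => by ring,
      h.tsum_eq]
    field_simp
    ring
  · simp

lemma series_coeff_eq_succ_mul_rf_div (k j l : ℕ) :
    rf ((l : ℝ) + 2) j * rf 2 l / (rf ((l : ℝ) + k + 2) j * l !)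
      = (l + 1) * (rf (l + 2) j / rf (l + k + 2) j) := by
  have := (rf_pos (by positivity : (0 : ℝ) < l + k + 2) j).ne'
  rw [rf_two, Nat.factorial_succ]
  push_cast
  field_simp

lemma hypergeometric_coeff_eq_mul_series_coeff (k j l : ℕ) :
    rf ((k : ℝ) + 2) l * rf ((j : ℝ) + 2) l / (rf ((k : ℝ) + j + 2) l * l !)
      = (j + k + 1)! / ((j + 1)! * (k + 1)!)
        * (rf ((l : ℝ) + 2) j * rf 2 l / (rf ((l : ℝ) + k + 2) j * l !)) := by
  have e1 : (l : ℝ) + k + 2 = ((l + k : ℕ) : ℝ) + 2 := by push_cast; ring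
  have e2 : (k : ℝ) + j + 2 = ((k + j : ℕ) : ℝ) + 2 := by push_cast; ring
  rw [e1, e2]
  simp only [rf_natCast_add_two, rf_two]
  ring_nf
  field_simp

theorem stmt_19_general (k j : ℕ) :
    (∀ x : ℝ, |x| < 1 →
        ∑' l : ℕ, rf ((l : ℝ) + 2) j * rf 2 l / (rf ((l : ℝ) + k + 2) j * l.factorial) * x ^ l
          = ((j + 1).factorial : ℝ) * ((k + 1).factorial : ℝ) / ((j + k + 1).factorial : ℝ)
              * F21 ((k : ℝ) + 2) ((j : ℝ) + 2) ((k : ℝ) + (j : ℝ) + 2) x) ∧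
    Tendsto (fun x : ℝ => (1 - x) ^ 2 * F21 ((k : ℝ) + 2) ((j : ℝ) + 2) ((k : ℝ) + (j : ℝ) + 2) x)
      (nhdsWithin 1 (Set.Iio 1))
      (nhds (((j + k + 1).factorial : ℝ) / (((j + 1).factorial : ℝ) * ((k + 1).factorial : ℝ)))) := by
  set c : ℝ := (j + k + 1)! / ((j + 1)! * (k + 1)!)
  set R : ℕ → ℝ := fun l => rf (l + 2) j / rf (l + k + 2) j
  have hseries (x : ℝ) :
      ∑' l : ℕ, rf ((l : ℝ) + 2) j * rf 2 l / (rf ((l : ℝ) + k + 2) j * l !) * x ^ l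
        = ∑' l : ℕ, (l + 1) * R l * x ^ l := by
    simp only [series_coeff_eq_succ_mul_rf_div, R]
  have hF (x : ℝ) : F21 (k + 2) (j + 2) (k + j + 2) x = c * ∑' l : ℕ, (l + 1) * R l * x ^ l := by
    rw [F21, ← hseries, ← tsum_mul_left]
    simp only [hypergeometric_coeff_eq_mul_series_coeff, mul_assoc]
    rfl
  refine ⟨fun x _ => ?_, ?_⟩
  · rw [hseries, hF, ← inv_div, inv_mul_cancel_left₀ (by positivity)]
  · have hR : Tendsto R atTop (𝓝 1) := by
      simpa only [R, add_assoc] using tendsto_rf_add_div_rf_add 2 (k + 2) j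
    simpa [hF, mul_left_comm] using (tendsto_one_sub_sq_mul_tsum hR).const_mul c

theorem stmt_19 (k j : ℕ) (hj : j ≤ k) :
    (∀ x : ℝ, |x| < 1 →
        ∑' l : ℕ, rf ((l : ℝ) + 2) j * rf 2 l / (rf ((l : ℝ) + k + 2) j * l.factorial) * x ^ l
          = ((j + 1).factorial : ℝ) * ((k + 1).factorial : ℝ) / ((j + k + 1).factorial : ℝ)
              * F21 ((k : ℝ) + 2) ((j : ℝ) + 2) ((k : ℝ) + (j : ℝ) + 2) x) ∧
    Tendsto (fun x : ℝ => (1 - x) ^ 2 * F21 ((k : ℝ) + 2) ((j : ℝ) + 2) ((k : ℝ) + (j : ℝ) + 2) x)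
      (nhdsWithin 1 (Set.Iio 1))
      (nhds (((j + k + 1).factorial : ℝ) / (((j + 1).factorial : ℝ) * ((k + 1).factorial : ℝ)))) :=
  stmt_19_general k j
end
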